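/- arXiv:1709.06793 — 6 statements merged into one kernel-verified Lean document; each statement's English description precedes it below -/
import Mathlib

section
/- Let n ≥ 1, let Â ∈ ℝ^{n×n} be a symmetric matrix with zero row sums, let κ ∈ ℝ^n, and let S be the scaled matrix of Â and κ. Then for all v, w ∈ ℝ^n one has v^T S w = −(1/4) · Σ_{i≠j} (κ_i + κ_j)(v_i − v_j)(w_i − w_j) Â_{ij}. -/
open Matrix Finset

/-- The scaled matrix `S` of a matrix `A` and a coefficient vector `κ`:
`S_{ij} = ½(κ_i + κ_j) A_{ij}` for `i ≠ j` and `S_{ii} = −∑_{j≠i} S_{ij}`. -/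
noncomputable def scaledMatrix {n : ℕ} (A : Matrix (Fin n) (Fin n) ℝ) (κ : Fin n → ℝ) :
    Matrix (Fin n) (Fin n) ℝ :=
  fun i j =>
    if i = j then -∑ j' ∈ Finset.univ.erase i, (1 / 2) * (κ i + κ j') * A i j'
    else (1 / 2) * (κ i + κ j) * A i j

private lemma erase_sum_eq_ite {n : ℕ} (g : Fin n → Fin n → ℝ) (i : Fin n) :
    ∑ j ∈ Finset.univ.erase i, g i j = ∑ j, if j = i then 0 else g i j := by
  symm
  rw [← Finset.add_sum_erase Finset.univ (fun j => if j = i then (0:ℝ) else g i j)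
      (Finset.mem_univ i)]
  rw [if_pos rfl, zero_add]
  exact Finset.sum_congr rfl fun j hj => if_neg (Finset.ne_of_mem_erase hj)

private lemma swap_offdiag_sum {n : ℕ} (g : Fin n → Fin n → ℝ) :
    ∑ i, ∑ j ∈ Finset.univ.erase i, g i j
      = ∑ i, ∑ j ∈ Finset.univ.erase i, g j i := by
  simp only [erase_sum_eq_ite g]
  rw [Finset.sum_comm]
  apply Finset.sum_congr rfl; intro i _
  rw [erase_sum_eq_ite (fun a b => g b a) i]
  apply Finset.sum_congr rfl; intro j _
  by_cases hij : i = j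
  · subst hij; simp
  · rw [if_neg hij, if_neg (Ne.symm hij)]

/-- If `Â` is symmetric with zero row sums and `S` is its scaled matrix,
then `vᵀ S w = −¼ ∑_{i≠j} (κ_i + κ_j)(v_i − v_j)(w_i − w_j) Â_{ij}`. -/
theorem scaledMatrix_quadratic_form (n : ℕ) (hn : 1 ≤ n)
    (A : Matrix (Fin n) (Fin n) ℝ) (hsym : A.IsSymm)
    (hrow : ∀ i, ∑ j, A i j = 0) (κ : Fin n → ℝ) (v w : Fin n → ℝ) :
    v ⬝ᵥ (scaledMatrix A κ) *ᵥ w =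
      -(1 / 4) * ∑ i, ∑ j ∈ Finset.univ.erase i,
        (κ i + κ j) * (v i - v j) * (w i - w j) * A i j := by
  have hA : ∀ i j, A j i = A i j := fun i j => hsym.apply i j
  set f : Fin n → Fin n → ℝ := fun i j => (1 / 2) * (κ i + κ j) * A i j with hf
  have hfsymm : ∀ i j, f j i = f i j := by
    intro i j; simp only [hf, hA i j]; ring
  set g : Fin n → Fin n → ℝ := fun i j => f i j * v i * (w j - w i) with hg
  -- LHS as a sum of off-diagonal terms
  have key : v ⬝ᵥ (scaledMatrix A κ) *ᵥ w
      = ∑ i, ∑ j ∈ Finset.univ.erase i, g i j := by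
    unfold dotProduct Matrix.mulVec scaledMatrix
    simp only [dotProduct]
    apply Finset.sum_congr rfl
    intro i _
    have hsplit : ∑ j, (if i = j then -∑ j' ∈ Finset.univ.erase i, f i j' else f i j) * w j
        = (-∑ j' ∈ Finset.univ.erase i, f i j') * w i
          + ∑ j ∈ Finset.univ.erase i, f i j * w j := by
      rw [← Finset.add_sum_erase _ _ (Finset.mem_univ i)]
      simp only [if_pos rfl]
      congr 1
      apply Finset.sum_congr rfl
      intro j hj
      rw [if_neg (Ne.symm (Finset.ne_of_mem_erase hj))]
    rw [hsplit, neg_mul, Finset.sum_mul, mul_add, mul_neg, Finset.mul_sum, Finset.mul_sum,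
      neg_add_eq_sub, ← Finset.sum_sub_distrib]
    apply Finset.sum_congr rfl
    intro j _
    simp only [hg]
    ring
  have hswap := swap_offdiag_sum g
  have h5 : (∑ i, ∑ j ∈ Finset.univ.erase i, g i j)
        + (∑ i, ∑ j ∈ Finset.univ.erase i, g i j)
      = -(1 / 2) * ∑ i, ∑ j ∈ Finset.univ.erase i,
          (κ i + κ j) * (v i - v j) * (w i - w j) * A i j := by
    nth_rewrite 2 [hswap]
    rw [← Finset.sum_add_distrib, Finset.mul_sum]
    apply Finset.sum_congr rfl; intro i _
    rw [← Finset.sum_add_distrib, Finset.mul_sum]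
    apply Finset.sum_congr rfl; intro j _
    simp only [hg, hf, hA i j]
    ring
  rw [key]
  linarith
end

section
/- Let n ≥ 1 and let Â ∈ ℝ^{n×n} be a symmetric matrix with zero row sums whose off-diagonal entries are all nonpositive (the M-matrix setting). Let κ ∈ ℝ^n with κ_i ≥ 0 for all i. Then the scaled matrix S of Â and κ is positive semidefinite, i.e., v^T S v ≥ 0 for all v ∈ ℝ^n. -/
open Matrix Finset

/-- If `Â` is symmetric with zero row sums and nonpositive off-diagonal
entries (M-matrix setting), and `κ ≥ 0`, then the scaled matrix is positive semidefinite. -/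
theorem scaledMatrix_posSemidef (n : ℕ) (hn : 1 ≤ n)
    (A : Matrix (Fin n) (Fin n) ℝ) (hsym : A.IsSymm)
    (hrow : ∀ i, ∑ j, A i j = 0)
    (hoff : ∀ i j, i ≠ j → A i j ≤ 0)
    (κ : Fin n → ℝ) (hκ : ∀ i, 0 ≤ κ i) :
    ∀ v : Fin n → ℝ, 0 ≤ v ⬝ᵥ (scaledMatrix A κ) *ᵥ v := by
  intro v
  set c : Fin n → Fin n → ℝ := fun i j => (1 / 2) * (κ i + κ j) * A i j with hc
  have csymm : ∀ i j, c i j = c j i := by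
    intro i j
    simp only [hc]
    rw [hsym.apply j i]
    ring
  -- swap lemma
  have swap : ∑ i, ∑ j ∈ Finset.univ.erase i, (1 / 2) * (c i j * v j ^ 2)
      = ∑ i, ∑ j ∈ Finset.univ.erase i, (1 / 2) * (c i j * v i ^ 2) := by
    rw [Finset.sum_comm' (t' := Finset.univ) (s' := fun j => Finset.univ.erase j)
      (by intro i j; simp [Finset.mem_erase, ne_comm, and_comm])]
    refine Finset.sum_congr rfl fun j _ => Finset.sum_congr rfl fun i _ => ?_
    rw [csymm]
  have key : v ⬝ᵥ (scaledMatrix A κ) *ᵥ v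
      = ∑ i, ∑ j ∈ Finset.univ.erase i, (1 / 2) * (-(c i j)) * (v i - v j) ^ 2 := by
    have expand : v ⬝ᵥ (scaledMatrix A κ) *ᵥ v
        = ∑ i, ∑ j ∈ Finset.univ.erase i,
            ((1 / 2) * (-(c i j)) * (v i - v j) ^ 2
              + ((1 / 2) * (c i j * v j ^ 2) - (1 / 2) * (c i j * v i ^ 2))) := by
      simp only [dotProduct, mulVec, Finset.mul_sum]
      refine Finset.sum_congr rfl fun i _ => ?_
      rw [← Finset.add_sum_erase Finset.univ _ (Finset.mem_univ i)]
      have hdiag : scaledMatrix A κ i i = -∑ j' ∈ Finset.univ.erase i, c i j' := by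
        simp [scaledMatrix, hc]
      rw [hdiag]
      have hoffd : ∀ j ∈ Finset.univ.erase i,
          v i * (scaledMatrix A κ i j * v j) = v i * (c i j * v j) := by
        intro j hj
        have : i ≠ j := fun h => (Finset.mem_erase.mp hj).1 h.symm
        simp [scaledMatrix, this, hc]
      rw [Finset.sum_congr rfl hoffd]
      rw [show v i * ((-∑ j' ∈ Finset.univ.erase i, c i j') * v i)
            = ∑ j ∈ Finset.univ.erase i, -(c i j) * (v i * v i) by
          rw [← Finset.sum_mul, ← Finset.sum_neg_distrib]; ring]
      rw [← Finset.sum_add_distrib]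
      exact Finset.sum_congr rfl fun j _ => by ring
    rw [expand]
    have split : ∀ i, ∑ j ∈ Finset.univ.erase i,
          ((1 / 2) * (-(c i j)) * (v i - v j) ^ 2
            + ((1 / 2) * (c i j * v j ^ 2) - (1 / 2) * (c i j * v i ^ 2)))
        = (∑ j ∈ Finset.univ.erase i, (1 / 2) * (-(c i j)) * (v i - v j) ^ 2)
          + ((∑ j ∈ Finset.univ.erase i, (1 / 2) * (c i j * v j ^ 2))
            - ∑ j ∈ Finset.univ.erase i, (1 / 2) * (c i j * v i ^ 2)) := by
      intro i; rw [Finset.sum_add_distrib, Finset.sum_sub_distrib]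
    simp only [split]
    rw [Finset.sum_add_distrib, Finset.sum_sub_distrib, swap, sub_self, add_zero]
  rw [key]
  refine Finset.sum_nonneg fun i _ => Finset.sum_nonneg fun j hj => ?_
  have hij : i ≠ j := fun h => (Finset.mem_erase.mp hj).1 h.symm
  have hA : A i j ≤ 0 := hoff i j hij
  have hcij : c i j ≤ 0 := by
    simp only [hc]
    have : 0 ≤ κ i + κ j := add_nonneg (hκ i) (hκ j)
    nlinarith
  have : 0 ≤ -(c i j) := neg_nonneg.mpr hcij
  positivity
end

section
/- Let n ≥ 1 and let Â ∈ ℝ^{n×n} be a symmetric matrix with zero row sums whose off-diagonal entries are all nonpositive. Let κ ∈ ℝ^n and α, β ∈ ℝ satisfy α ≤ (1/2)(κ_i + κ_j) ≤ β for all i ≠ j, and let S be the scaled matrix of Â and κ. Then α · v^T Â v ≤ v^T S v ≤ β · v^T Â v for all v ∈ ℝ^n. -/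
open Matrix Finset

/-- Quadratic form identity for symmetric zero-row-sum matrices. -/
lemma quadform_eq {n : ℕ} (M : Matrix (Fin n) (Fin n) ℝ) (hsym : M.IsSymm)
    (hrow : ∀ i, ∑ j, M i j = 0) (v : Fin n → ℝ) :
    v ⬝ᵥ M *ᵥ v = -(1/2) * ∑ i, ∑ j, M i j * (v i - v j)^2 := by
  have hcol : ∀ j, ∑ i, M i j = 0 := by
    intro j
    have : ∑ i, M i j = ∑ i, M j i :=
      Finset.sum_congr rfl fun i _ => hsym.apply j i
    rw [this, hrow j]
  have expand : ∀ i j : Fin n, M i j * (v i - v j)^2 =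
      M i j * v i * v i - 2*(v i * (M i j * v j)) + M i j * v j * v j := by
    intros; ring
  have h1 : ∑ i, ∑ j, M i j * v i * v i = 0 := by
    refine Finset.sum_eq_zero fun i _ => ?_
    have : ∑ j, M i j * v i * v i = (∑ j, M i j) * (v i * v i) := by
      rw [Finset.sum_mul]; exact Finset.sum_congr rfl fun j _ => by ring
    rw [this, hrow i, zero_mul]
  have h3 : ∑ i, ∑ j, M i j * v j * v j = 0 := by
    rw [Finset.sum_comm]
    refine Finset.sum_eq_zero fun j _ => ?_
    have : ∑ i, M i j * v j * v j = (∑ i, M i j) * (v j * v j) := by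
      rw [Finset.sum_mul]; exact Finset.sum_congr rfl fun i _ => by ring
    rw [this, hcol j, zero_mul]
  simp_rw [expand, Finset.sum_add_distrib, Finset.sum_sub_distrib, h1, h3,
    ← Finset.mul_sum]
  simp only [dotProduct, mulVec, Finset.mul_sum]
  simp_rw [← Finset.mul_sum]
  ring

/-- Two-sided spectral equivalence: if `Â` is symmetric with zero row
sums and nonpositive off-diagonal entries, and `α ≤ ½(κ_i + κ_j) ≤ β` for all `i ≠ j`,
then `α · vᵀ Â v ≤ vᵀ S v ≤ β · vᵀ Â v` for all `v`. -/
theorem scaledMatrix_spectral_equivalence (n : ℕ) (hn : 1 ≤ n)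
    (A : Matrix (Fin n) (Fin n) ℝ) (hsym : A.IsSymm)
    (hrow : ∀ i, ∑ j, A i j = 0)
    (hoff : ∀ i j, i ≠ j → A i j ≤ 0)
    (κ : Fin n → ℝ) (α β : ℝ)
    (hαβ : ∀ i j, i ≠ j → α ≤ (1 / 2) * (κ i + κ j) ∧ (1 / 2) * (κ i + κ j) ≤ β) :
    ∀ v : Fin n → ℝ,
      α * (v ⬝ᵥ A *ᵥ v) ≤ v ⬝ᵥ (scaledMatrix A κ) *ᵥ v ∧
      v ⬝ᵥ (scaledMatrix A κ) *ᵥ v ≤ β * (v ⬝ᵥ A *ᵥ v) := by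
  set S := scaledMatrix A κ with hS
  have hSoff : ∀ i j, i ≠ j → S i j = (1/2) * (κ i + κ j) * A i j := by
    intro i j h; rw [hS]; simp [scaledMatrix, h]
  have hSsym : S.IsSymm := by
    rw [Matrix.IsSymm]
    ext i j
    by_cases h : i = j
    · subst h; rfl
    · rw [Matrix.transpose_apply, hSoff j i (Ne.symm h), hSoff i j h, hsym.apply i j]
      ring
  have hSrow : ∀ i, ∑ j, S i j = 0 := by
    intro i
    rw [← Finset.add_sum_erase _ _ (Finset.mem_univ i)]
    have : ∑ j ∈ Finset.univ.erase i, S i j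
        = ∑ j ∈ Finset.univ.erase i, (1/2) * (κ i + κ j) * A i j := by
      refine Finset.sum_congr rfl fun j hj => hSoff i j ?_
      exact Ne.symm (Finset.ne_of_mem_erase hj)
    rw [this, hS]; simp [scaledMatrix]
  intro v
  rw [quadform_eq A hsym hrow v, quadform_eq S hSsym hSrow v]
  constructor
  · rw [← mul_assoc, mul_comm α, mul_assoc]
    simp_rw [Finset.mul_sum]
    refine Finset.sum_le_sum fun i _ => Finset.sum_le_sum fun j _ => ?_
    by_cases h : i = j
    · subst h; simp
    · rw [hSoff i j h]
      nlinarith [mul_nonneg (sub_nonneg.2 (hαβ i j h).1)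
        (mul_nonneg (neg_nonneg.2 (hoff i j h)) (sq_nonneg (v i - v j)))]
  · rw [← mul_assoc, mul_comm β, mul_assoc]
    simp_rw [Finset.mul_sum]
    refine Finset.sum_le_sum fun i _ => Finset.sum_le_sum fun j _ => ?_
    by_cases h : i = j
    · subst h; simp
    · rw [hSoff i j h]
      nlinarith [mul_nonneg (sub_nonneg.2 (hαβ i j h).2)
        (mul_nonneg (neg_nonneg.2 (hoff i j h)) (sq_nonneg (v i - v j)))]
end

section
/- Let Â ∈ ℝ^{3×3} be symmetric with zero row sums, with Â_{12} > 0, Â_{13} ≤ 0 and Â_{23} ≤ 0. Let λ > 0 be such that x^T Â x ≥ λ·((x_1 − x_2)² + (x_1 − x_3)² + (x_2 − x_3)²) for all x ∈ ℝ³. Let k_{12}, k_{13}, k_{23} be real numbers, set k_min = min{k_{12}, k_{13}, k_{23}}, and assume k_min > 0 and (k_{12} − k_min)·Â_{12} ≤ k_min·λ. Define S ∈ ℝ^{3×3} by S_{ij} = k_{ij} Â_{ij} for i ≠ j (with k_{ji} = k_{ij}) and S_{ii} = −Σ_{j≠i} S_{ij}. Then x^T S x ≥ λ·k_min·((x_1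 − x_3)² + (x_2 − x_3)²) for all x ∈ ℝ³; in particular S is positive semidefinite. -/
open Matrix Finset

/-- Element-level coercivity of the (MA2)-modified stencil scaling:
for a symmetric `3×3` reference stiffness matrix `Â` with zero row sums, `Â_{12} > 0`,
`Â_{13} ≤ 0`, `Â_{23} ≤ 0`, a coercivity constant `λ > 0` relative to the complete-graph
Laplacian, and edge coefficients `k_{12}, k_{13}, k_{23}` with `k_min > 0` and
`(k_{12} − k_min)·Â_{12} ≤ k_min·λ`, the scaled matrix `S` satisfies
`xᵀ S x ≥ λ k_min ((x_1 − x_3)² + (x_2 − x_3)²)`; in particular `S` is positive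
semidefinite. -/
theorem modified_scaling_element_coercive
    (A : Matrix (Fin 3) (Fin 3) ℝ) (hsym : A.IsSymm)
    (hrow : ∀ i, ∑ j, A i j = 0)
    (h12pos : 0 < A 0 1) (h13 : A 0 2 ≤ 0) (h23 : A 1 2 ≤ 0)
    (lam : ℝ) (hlam : 0 < lam)
    (hcoer : ∀ x : Fin 3 → ℝ,
      lam * ((x 0 - x 1) ^ 2 + (x 0 - x 2) ^ 2 + (x 1 - x 2) ^ 2) ≤ x ⬝ᵥ A *ᵥ x)
    (k12 k13 k23 : ℝ) (kmin : ℝ) (hkmin : kmin = min (min k12 k13) k23)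
    (hkminpos : 0 < kmin)
    (hMA2 : (k12 - kmin) * A 0 1 ≤ kmin * lam)
    (S : Matrix (Fin 3) (Fin 3) ℝ)
    (hS01 : S 0 1 = k12 * A 0 1) (hS10 : S 1 0 = k12 * A 1 0)
    (hS02 : S 0 2 = k13 * A 0 2) (hS20 : S 2 0 = k13 * A 2 0)
    (hS12 : S 1 2 = k23 * A 1 2) (hS21 : S 2 1 = k23 * A 2 1)
    (hSdiag : ∀ i, S i i = -∑ j ∈ Finset.univ.erase i, S i j) :
    (∀ x : Fin 3 → ℝ,
        lam * kmin * ((x 0 - x 2) ^ 2 + (x 1 - x 2) ^ 2) ≤ x ⬝ᵥ S *ᵥ x) ∧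
    ∀ x : Fin 3 → ℝ, 0 ≤ x ⬝ᵥ S *ᵥ x := by

  have ha10 : A 1 0 = A 0 1 := by
    have := hsym; rw [Matrix.IsSymm] at this
    have := congrFun (congrFun this 1) 0; simpa [Matrix.transpose_apply] using this.symm
  have ha20 : A 2 0 = A 0 2 := by
    have := hsym; rw [Matrix.IsSymm] at this
    have := congrFun (congrFun this 2) 0; simpa [Matrix.transpose_apply] using this.symm
  have ha21 : A 2 1 = A 1 2 := by
    have := hsym; rw [Matrix.IsSymm] at this
    have := congrFun (congrFun this 2) 1; simpa [Matrix.transpose_apply] using this.symm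
  have hr0 := hrow 0; have hr1 := hrow 1; have hr2 := hrow 2
  rw [Fin.sum_univ_three] at hr0 hr1 hr2
  have hA00 : A 0 0 = -(A 0 1 + A 0 2) := by linarith
  have hA11 : A 1 1 = -(A 0 1 + A 1 2) := by rw [ha10] at hr1; linarith
  have hA22 : A 2 2 = -(A 0 2 + A 1 2) := by rw [ha20, ha21] at hr2; linarith
  have he0 : (Finset.univ.erase (0 : Fin 3)) = {1, 2} := by decide
  have he1 : (Finset.univ.erase (1 : Fin 3)) = {0, 2} := by decide
  have he2 : (Finset.univ.erase (2 : Fin 3)) = {0, 1} := by decide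
  have hS00 : S 0 0 = -(S 0 1 + S 0 2) := by rw [hSdiag 0, he0]; simp
  have hS11 : S 1 1 = -(S 1 0 + S 1 2) := by rw [hSdiag 1, he1]; simp
  have hS22 : S 2 2 = -(S 2 0 + S 2 1) := by rw [hSdiag 2, he2]; simp
  have hk1 : kmin ≤ k12 := by rw [hkmin]; exact le_trans (min_le_left _ _) (min_le_left _ _)
  have hk2 : kmin ≤ k13 := by rw [hkmin]; exact le_trans (min_le_left _ _) (min_le_right _ _)
  have hk3 : kmin ≤ k23 := by rw [hkmin]; exact min_le_right _ _
  have key : ∀ x : Fin 3 → ℝ,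
      lam * kmin * ((x 0 - x 2) ^ 2 + (x 1 - x 2) ^ 2) ≤ x ⬝ᵥ S *ᵥ x := by
    intro x
    have hA := hcoer x
    have hSx : x ⬝ᵥ S *ᵥ x =
        -(k12 * A 0 1) * (x 0 - x 1) ^ 2 - (k13 * A 0 2) * (x 0 - x 2) ^ 2
          - (k23 * A 1 2) * (x 1 - x 2) ^ 2 := by
      simp only [dotProduct, Matrix.mulVec, Fin.sum_univ_three, hS00, hS11, hS22,
        hS01, hS10, hS02, hS20, hS12, hS21, ha10, ha20, ha21]
      ring
    have hAx : x ⬝ᵥ A *ᵥ x =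
        -(A 0 1) * (x 0 - x 1) ^ 2 - (A 0 2) * (x 0 - x 2) ^ 2
          - (A 1 2) * (x 1 - x 2) ^ 2 := by
      simp only [dotProduct, Matrix.mulVec, Fin.sum_univ_three, hA00, hA11, hA22,
        ha10, ha20, ha21]
      ring
    rw [hSx]; rw [hAx] at hA
    set a := A 0 1 with ha
    set b := A 0 2 with hb
    set c := A 1 2 with hc
    set u := x 0 - x 1 with hu
    set v := x 0 - x 2 with hv
    set w := x 1 - x 2 with hw
    have H1 : (k12 - kmin) * a * u ^ 2 ≤ kmin * lam * u ^ 2 :=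
      mul_le_mul_of_nonneg_right hMA2 (sq_nonneg u)
    have H2 : kmin * (lam * (u ^ 2 + v ^ 2 + w ^ 2)) ≤
        kmin * (-a * u ^ 2 - b * v ^ 2 - c * w ^ 2) :=
      mul_le_mul_of_nonneg_left hA hkminpos.le
    have H3 : 0 ≤ (k13 - kmin) * (-b) * v ^ 2 :=
      mul_nonneg (mul_nonneg (sub_nonneg.2 hk2) (neg_nonneg.2 h13)) (sq_nonneg v)
    have H4 : 0 ≤ (k23 - kmin) * (-c) * w ^ 2 :=
      mul_nonneg (mul_nonneg (sub_nonneg.2 hk3) (neg_nonneg.2 h23)) (sq_nonneg w)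
    linarith [H1, H2, H3, H4]
  refine ⟨key, fun x => le_trans ?_ (key x)⟩
  positivity
end

section
/- Let E be a real normed vector space (e.g., ℝ^d) and k : E → ℝ be twice continuously differentiable with ‖D²k(x)‖ ≤ M for all x ∈ E. Let c ∈ E, let a, b ∈ E satisfy a + b = 2c, and let p_1, …, p_m ∈ E (m ≥ 1). If ‖a − c‖ ≤ r and ‖p_l − c‖ ≤ r for all l, then |(k(a) + k(b)) − (1/m)·Σ_{l=1}^{m} (k(p_l) + k(2c − p_l))| ≤ 2·M·r². -/
/-!
For `‖x - c‖ ≤ r` put `h = x - c`. The symmetric second difference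
`φ t = k (c + t h) + k (c - t h) - 2 k c` vanishes at `t = 0`, and since `Dk` is
`M`-Lipschitz its derivative `Dk (c + t h) h - Dk (c - t h) h` is at most `2 M ‖h‖² t`;
hence `|φ 1| ≤ M ‖h‖²`, which is `M r²` at `x = a` and at every `x = p l`. Subtracting
`2 k c` from both the edge value and each element value, the difference is that of a number
and a mean of numbers all within `M r²` of zero, so it is at most `2 M r²`.
-/

open Finset

section SecondDifference

variable {E F : Type*} [NormedAddCommGroup E] [NormedSpace ℝ E]
  [NormedAddCommGroup F] [NormedSpace ℝ F]

theorem norm_fderiv_fderiv_eq_norm_iteratedFDeriv_two (f : E → F) (x : E) :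
    ‖fderiv ℝ (fderiv ℝ f) x‖ = ‖iteratedFDeriv ℝ 2 f x‖ := by
  rw [← norm_iteratedFDeriv_one, norm_iteratedFDeriv_fderiv]

theorem norm_fderiv_sub_fderiv_le_of_norm_iteratedFDeriv_two_le {f : E → F}
    (hf : ContDiff ℝ 2 f) {M : ℝ} (hM : ∀ x, ‖iteratedFDeriv ℝ 2 f x‖ ≤ M) (u v : E) :
    ‖fderiv ℝ f u - fderiv ℝ f v‖ ≤ M * ‖u - v‖ := by
  have hf' : Differentiable ℝ (fderiv ℝ f) :=
    (hf.fderiv_right (m := 1) le_rfl).differentiable one_ne_zero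
  refine convex_univ.norm_image_sub_le_of_norm_fderiv_le (fun z _ => hf' z) (fun z _ => ?_)
    (Set.mem_univ v) (Set.mem_univ u)
  rw [norm_fderiv_fderiv_eq_norm_iteratedFDeriv_two]
  exact hM z

theorem hasDerivAt_comp_add_smul_add_comp_sub_smul {f : E → F} (hf : Differentiable ℝ f)
    (c h : E) (t : ℝ) :
    HasDerivAt (fun t : ℝ => f (c + t • h) + f (c - t • h))
      (fderiv ℝ f (c + t • h) h - fderiv ℝ f (c - t • h) h) t := by
  have hplus : HasDerivAt (fun t : ℝ => c + t • h) h t := by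
    simpa using ((hasDerivAt_id t).smul_const h).const_add c
  have hminus : HasDerivAt (fun t : ℝ => c - t • h) (-h) t := by
    simpa using ((hasDerivAt_id t).smul_const h).const_sub c
  refine (((hf _).hasFDerivAt.comp_hasDerivAt t hplus).add
    ((hf _).hasFDerivAt.comp_hasDerivAt t hminus)).congr_deriv ?_
  rw [map_neg, ← sub_eq_add_neg]

theorem norm_central_second_difference_le {f : E → F} (hf : Differentiable ℝ f) {M : ℝ}
    (hlip : ∀ u v, ‖fderiv ℝ f u - fderiv ℝ f v‖ ≤ M * ‖u - v‖) (c h : E) :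
    ‖f (c + h) + f (c - h) - (2 : ℝ) • f c‖ ≤ M * ‖h‖ ^ 2 := by
  set φ : ℝ → F := fun t => f (c + t • h) + f (c - t • h) - (2 : ℝ) • f c
  have hφ (t : ℝ) :
      HasDerivAt φ (fderiv ℝ f (c + t • h) h - fderiv ℝ f (c - t • h) h) t :=
    (hasDerivAt_comp_add_smul_add_comp_sub_smul hf c h t).sub_const _
  have hbound (t : ℝ) (ht : t ∈ Set.Ico (0 : ℝ) 1) :
      ‖fderiv ℝ f (c + t • h) h - fderiv ℝ f (c - t • h) h‖ ≤
        2 * M * ‖h‖ ^ 2 * t := by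
    have hgap : (c + t • h) - (c - t • h) = (2 * t) • h := by
      rw [two_mul, add_smul]; abel
    calc ‖fderiv ℝ f (c + t • h) h - fderiv ℝ f (c - t • h) h‖
        = ‖(fderiv ℝ f (c + t • h) - fderiv ℝ f (c - t • h)) h‖ := rfl
      _ ≤ M * ‖(c + t • h) - (c - t • h)‖ * ‖h‖ :=
          ((fderiv ℝ f _ - fderiv ℝ f _).le_opNorm h).trans (by gcongr; exact hlip _ _)
      _ = 2 * M * ‖h‖ ^ 2 * t := by
          rw [hgap, norm_smul, Real.norm_of_nonneg (by linarith [ht.1])]; ring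
  have hB (t : ℝ) : HasDerivAt (fun t => M * ‖h‖ ^ 2 * t ^ 2) (2 * M * ‖h‖ ^ 2 * t) t :=
    ((hasDerivAt_pow 2 t).const_mul (M * ‖h‖ ^ 2)).congr_deriv (by norm_num; ring)
  have hφ1 := image_norm_le_of_norm_deriv_right_le_deriv_boundary
    (fun t _ => (hφ t).continuousAt.continuousWithinAt) (fun t _ => (hφ t).hasDerivWithinAt)
    (by simp [φ, two_smul]) hB hbound (Set.right_mem_Icc.mpr zero_le_one)
  simpa [φ] using hφ1

theorem abs_add_reflect_sub_two_mul_le {k : E → ℝ} (hk : ContDiff ℝ 2 k) {M : ℝ}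
    (hM : ∀ x, ‖iteratedFDeriv ℝ 2 k x‖ ≤ M) (c x : E) :
    |k x + k ((2 : ℝ) • c - x) - 2 * k c| ≤ M * ‖x - c‖ ^ 2 := by
  have h := norm_central_second_difference_le (hk.differentiable two_ne_zero)
    (norm_fderiv_sub_fderiv_le_of_norm_iteratedFDeriv_two_le hk hM) c (x - c)
  rwa [add_sub_cancel, sub_sub_eq_add_sub, ← two_smul ℝ c, smul_eq_mul,
    Real.norm_eq_abs] at h

end SecondDifference

theorem abs_sub_mean_le_two_mul {ι : Type*} {s : Finset ι} (hs : s.Nonempty) {x C A : ℝ}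
    {y : ι → ℝ} (hx : |x - C| ≤ A) (hy : ∀ i ∈ s, |y i - C| ≤ A) :
    |x - (1 / #s) * ∑ i ∈ s, y i| ≤ 2 * A := by
  have hcard : (0 : ℝ) < #s := by exact_mod_cast hs.card_pos
  have hmean : |(1 / #s) * ∑ i ∈ s, y i - C| ≤ A := by
    have hshift : (1 / #s) * ∑ i ∈ s, y i - C = (1 / #s) * ∑ i ∈ s, (y i - C) := by
      rw [sum_sub_distrib, sum_const, nsmul_eq_mul]; field_simp
    rw [hshift, abs_mul, abs_of_pos (by positivity)]
    calc (1 / #s) * |∑ i ∈ s, (y i - C)| ≤ (1 / #s) * (#s * A) := by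
          gcongr
          exact (abs_sum_le_sum_abs _ _).trans (by simpa using sum_le_card_nsmul s _ A hy)
      _ = A := by field_simp
  calc |x - (1 / #s) * ∑ i ∈ s, y i|
      ≤ |x - C| + |C - (1 / #s) * ∑ i ∈ s, y i| := abs_sub_le _ _ _
    _ ≤ 2 * A := by rw [abs_sub_comm C]; linarith

/-- Local consistency estimate between edge-averaged and
element-averaged coefficient values: if `k : E → ℝ` is twice continuously differentiable
with `‖D²k(x)‖ ≤ M` everywhere, `a + b = 2c`, `‖a − c‖ ≤ r` and `‖p_l − c‖ ≤ r` for all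
`l`, then `|(k(a) + k(b)) − (1/m) ∑_l (k(p_l) + k(2c − p_l))| ≤ 2 M r²`. -/
theorem abs_edge_average_sub_reflected_average_le
    {E : Type*} [NormedAddCommGroup E] [NormedSpace ℝ E]
    (k : E → ℝ) (hk : ContDiff ℝ 2 k)
    (M : ℝ) (hM : ∀ x : E, ‖iteratedFDeriv ℝ 2 k x‖ ≤ M)
    (c a b : E) (hab : a + b = (2 : ℝ) • c)
    (m : ℕ) (hm : 1 ≤ m) (p : Fin m → E) (r : ℝ)
    (ha : ‖a - c‖ ≤ r) (hp : ∀ l, ‖p l - c‖ ≤ r) :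
    |(k a + k b) - (1 / (m : ℝ)) * ∑ l, (k (p l) + k ((2 : ℝ) • c - p l))| ≤
      2 * M * r ^ 2 := by
  obtain rfl : b = (2 : ℝ) • c - a := by rw [← hab]; abel
  have hM0 : 0 ≤ M := (norm_nonneg _).trans (hM c)
  have hnear (x : E) (hx : ‖x - c‖ ≤ r) :
      |k x + k ((2 : ℝ) • c - x) - 2 * k c| ≤ M * r ^ 2 :=
    (abs_add_reflect_sub_two_mul_le hk hM c x).trans (by gcongr)
  have hs : (univ : Finset (Fin m)).Nonempty := univ_nonempty_iff.mpr ⟨⟨0, hm⟩⟩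
  have h := abs_sub_mean_le_two_mul hs (hnear a ha) (fun l _ => hnear (p l) (hp l))
  rw [card_univ, Fintype.card_fin] at h
  linarith
end

section
/- Let V be a real inner product space with inner product ⟨·,·⟩ and norm ‖·‖, let V_h be a subspace of V, let a : V × V → ℝ be a symmetric bilinear form, let a_h : V × V → ℝ be a bilinear form, and let f : V → ℝ be a linear functional. Suppose p, u_h, q ∈ V_h and w ∈ V satisfy: (i) a(p, v) = f(v) for all v ∈ V_h; (ii) a_h(u_h, v) = f(v) for all v ∈ V_h; (iii) a(v, w) = ⟨u_h − p, v⟩ for all v ∈ V; (iv) a(v, w − q) = 0 for all v ∈ V_h. Then ‖u_h − p‖² = a(u_h, q) − a_h(u_h, q). -/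
open scoped RealInnerProductSpace

/-- Abstract duality identity for the `L²` estimate: if `p` is the
Galerkin approximation (i), `u_h` the perturbed discrete solution (ii), `w` the dual
solution (iii) and `q` its Galerkin approximation (iv), then
`‖u_h − p‖² = a(u_h, q) − a_h(u_h, q)`. -/
theorem duality_identity
    {V : Type*} [NormedAddCommGroup V] [InnerProductSpace ℝ V]
    (Vh : Submodule ℝ V)
    (a : V →ₗ[ℝ] V →ₗ[ℝ] ℝ) (hsym : ∀ x y : V, a x y = a y x)
    (ah : V →ₗ[ℝ] V →ₗ[ℝ] ℝ)
    (f : V →ₗ[ℝ] ℝ)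
    (p uh q : V) (hp : p ∈ Vh) (huh : uh ∈ Vh) (hq : q ∈ Vh)
    (w : V)
    (hGalerkin : ∀ v ∈ Vh, a p v = f v)
    (hDiscrete : ∀ v ∈ Vh, ah uh v = f v)
    (hDual : ∀ v : V, a v w = ⟪uh - p, v⟫)
    (hDualGalerkin : ∀ v ∈ Vh, a v (w - q) = 0) :
    ‖uh - p‖ ^ 2 = a uh q - ah uh q := by
  have h1 : a (uh - p) w = a (uh - p) q := by
    have := hDualGalerkin (uh - p) (Vh.sub_mem huh hp)
    simp only [map_sub] at this ⊢
    linarith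
  have h2 : ‖uh - p‖ ^ 2 = a (uh - p) w := by
    rw [hDual (uh - p), real_inner_self_eq_norm_sq]
  have h3 : a p q = f q := hGalerkin q hq
  have h4 : ah uh q = f q := hDiscrete q hq
  have h5 : a (uh - p) q = a uh q - a p q := by simp [map_sub]
  rw [h2, h1, h5, h3, h4]
end
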